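/- arXiv:2408.05858 — 9 statements merged into one kernel-verified Lean document; each statement's English description precedes it below -/
import Mathlib

section
/- Let X be a metric space, r > 0, and suppose X is r-contractible. Fix x₀ ∈ X. Then every r-loop at x₀ is discretely null-homotopic rel basepoint: for every n and every r-path f : {0,…,n} → X with f(0) = f(n) = x₀, there exist natural numbers N, m, an index k with k + n ≤ N, and a map H : {0,…,N} × {0,…,m} → X such that d(H(i,j), H(i+1,j)) ≤ r and d(H(i,j), H(i,j+1)) ≤ r for all valid i, j; H(i,0) = x₀ for all i; H(0,j) = H(N,j) = x₀ for all j; H(k+i, m) = f(i) for all 0 ≤ i ≤ n; and H(i,m) = x₀ for all i ≤ k and all i ≥ k + n. (This says the class of f in the discrete fundamental group A_{1,r}(X, x₀) is trivial.) -/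
/-- Discrete `(s,r)`-homotopy. -/
def DHomotopic {X Y : Type*} [MetricSpace X] [MetricSpace Y] (s r : ℝ) (f g : X → Y) : Prop :=
  ∃ (m : ℕ) (F : X → ℕ → Y),
    (∀ x, F x 0 = f x) ∧ (∀ x, F x m = g x) ∧
    (∀ i ≤ m, ∀ x x', dist (F x i) (F x' i) ≤ s * dist x x') ∧
    (∀ x, ∀ i ≤ m, ∀ j ≤ m, dist (F x i) (F x j) ≤ r * |(i : ℝ) - (j : ℝ)|)

/-- A metric space `X` is `r`-contractible if `id_X` is `(1,r)`-homotopic to a constant map. -/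
def DContractible (r : ℝ) (X : Type*) [MetricSpace X] : Prop :=
  ∃ x₀ : X, DHomotopic 1 r (id : X → X) (fun _ => x₀)

/-- If `X` is `r`-contractible and `x₀ ∈ X`, then every `r`-loop at `x₀` is discretely
null-homotopic rel basepoint; i.e. the discrete fundamental group `A_{1,r}(X,x₀)` is trivial. -/
theorem dContractible_trivial_discrete_pi1 {X : Type*} [MetricSpace X] (r : ℝ) (hr : 0 < r)
    (hX : DContractible r X) (x₀ : X) :
    ∀ (n : ℕ) (f : ℕ → X), (∀ i < n, dist (f i) (f (i + 1)) ≤ r) →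
      f 0 = x₀ → f n = x₀ →
      ∃ (N m k : ℕ), k + n ≤ N ∧ ∃ H : ℕ → ℕ → X,
        (∀ i < N, ∀ j ≤ m, dist (H i j) (H (i + 1) j) ≤ r) ∧
        (∀ i ≤ N, ∀ j < m, dist (H i j) (H i (j + 1)) ≤ r) ∧
        (∀ i ≤ N, H i 0 = x₀) ∧
        (∀ j ≤ m, H 0 j = x₀ ∧ H N j = x₀) ∧
        (∀ i ≤ n, H (k + i) m = f i) ∧
        (∀ i ≤ k, H i m = x₀) ∧
        (∀ i, k + n ≤ i → i ≤ N → H i m = x₀) := by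
  obtain ⟨c, m₀, F, hF0, hFm, hLip, hTime⟩ := hX
  intro n f hf hf0 hfn
  -- helper: small time steps move points by at most r
  have step : ∀ (x : X) (a b : ℕ), a ≤ m₀ → b ≤ m₀ → a ≤ b + 1 → b ≤ a + 1 →
      dist (F x a) (F x b) ≤ r := by
    intro x a b ha hb h1 h2
    have c1 : (a : ℝ) ≤ (b : ℝ) + 1 := by exact_mod_cast h1
    have c2 : (b : ℝ) ≤ (a : ℝ) + 1 := by exact_mod_cast h2
    calc dist (F x a) (F x b) ≤ r * |(a : ℝ) - (b : ℝ)| := hTime x a ha b hb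
      _ ≤ r * 1 := by
          apply mul_le_mul_of_nonneg_left _ hr.le
          rw [abs_sub_le_iff]; constructor <;> linarith
      _ = r := mul_one r
  by_cases h0 : m₀ = 0
  · -- degenerate: X is a single point
    have hall : ∀ x : X, x = x₀ := by
      intro x
      have h1 : F x m₀ = c := hFm x
      have h2 : F x₀ m₀ = c := hFm x₀
      rw [h0] at h1 h2
      rw [hF0] at h1 h2
      simp at h1 h2
      rw [h1, h2]
    refine ⟨n, 0, 0, by omega, fun _ _ => x₀, ?_, ?_, ?_, ?_, ?_, ?_, ?_⟩
    · intro i _ j _; simp [hr.le]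
    · intro i _ j _; simp [hr.le]
    · intro i _; rfl
    · intro j _; exact ⟨rfl, rfl⟩
    · intro i _; exact (hall (f i)).symm
    · intro i _; rfl
    · intro i _ _; rfl
  · have hm1 : 1 ≤ m₀ := Nat.one_le_iff_ne_zero.2 h0
    refine ⟨2 * m₀ + n, 2 * m₀, m₀, by omega,
      fun i j => if j < m₀ then F x₀ (min i (min (2 * m₀ + n - i) j))
        else F (f (min n (i - m₀))) (min i (min (2 * m₀ + n - i) (2 * m₀ - j))),
      ?_, ?_, ?_, ?_, ?_, ?_, ?_⟩
    · -- horizontal steps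
      intro i hi j hj
      dsimp only
      split_ifs with h
      · exact step _ _ _ (by omega) (by omega) (by omega) (by omega)
      · by_cases hmidc : m₀ ≤ i ∧ i < m₀ + n
        · have hmid : min n (i + 1 - m₀) = min n (i - m₀) + 1 := by omega
          have ht : min (i + 1) (min (2 * m₀ + n - (i + 1)) (2 * m₀ - j))
              = min i (min (2 * m₀ + n - i) (2 * m₀ - j)) := by omega
          rw [hmid, ht]
          calc dist (F (f (min n (i - m₀))) (min i (min (2 * m₀ + n - i) (2 * m₀ - j))))
                (F (f (min n (i - m₀) + 1)) (min i (min (2 * m₀ + n - i) (2 * m₀ - j))))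
              ≤ 1 * dist (f (min n (i - m₀))) (f (min n (i - m₀) + 1)) :=
                hLip _ (by omega) _ _
            _ = dist (f (min n (i - m₀))) (f (min n (i - m₀) + 1)) := one_mul _
            _ ≤ r := hf _ (by omega)
        · have hmid : min n (i + 1 - m₀) = min n (i - m₀) := by omega
          rw [hmid]
          exact step _ _ _ (by omega) (by omega) (by omega) (by omega)
    · -- vertical steps
      intro i hi j hj
      dsimp only
      split_ifs with h1 h2 h2
      · exact step _ _ _ (by omega) (by omega) (by omega) (by omega)
      · -- junction row: j + 1 = m₀
        have hj1 : j + 1 = m₀ := by omega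
        by_cases hi2 : m₀ < i ∧ i < m₀ + n
        · have hm : min i (min (2 * m₀ + n - i) (2 * m₀ - (j + 1))) = m₀ := by omega
          rw [hm, hFm (f (min n (i - m₀))), ← hFm x₀]
          exact step _ _ _ (by omega) (by omega) (by omega) (by omega)
        · have hx : f (min n (i - m₀)) = x₀ := by
            have : min n (i - m₀) = 0 ∨ min n (i - m₀) = n := by omega
            rcases this with h | h <;> rw [h]
            · exact hf0
            · exact hfn
          rw [hx]
          exact step _ _ _ (by omega) (by omega) (by omega) (by omega)
      · omega
      · exact step _ _ _ (by omega) (by omega) (by omega) (by omega)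
    · -- bottom row
      intro i hi
      dsimp only
      rw [if_pos (by omega : (0:ℕ) < m₀)]
      have : min i (min (2 * m₀ + n - i) 0) = 0 := by omega
      rw [this, hF0]
      rfl
    · -- side columns
      intro j hj
      constructor
      · dsimp only
        split_ifs with h
        · have : min 0 (min (2 * m₀ + n - 0) j) = 0 := by omega
          rw [this, hF0]
          rfl
        · have h1 : min (0:ℕ) (min (2 * m₀ + n - 0) (2 * m₀ - j)) = 0 := by omega
          have h2 : min n (0 - m₀) = 0 := by omega
          rw [h1, h2, hF0]
          exact hf0
      · dsimp only
        split_ifs with h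
        · have : min (2 * m₀ + n) (min (2 * m₀ + n - (2 * m₀ + n)) j) = 0 := by omega
          rw [this, hF0]
          rfl
        · have h1 : min (2 * m₀ + n)
              (min (2 * m₀ + n - (2 * m₀ + n)) (2 * m₀ - j)) = 0 := by omega
          have h2 : min n (2 * m₀ + n - m₀) = n := by omega
          rw [h1, h2, hF0]
          exact hfn
    · -- top row: the loop
      intro i hi
      dsimp only
      rw [if_neg (by omega : ¬ 2 * m₀ < m₀)]
      have h1 : min (m₀ + i) (min (2 * m₀ + n - (m₀ + i)) (2 * m₀ - 2 * m₀)) = 0 := by omega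
      have h2 : min n (m₀ + i - m₀) = i := by omega
      rw [h1, h2, hF0]
      rfl
    · intro i hi
      dsimp only
      rw [if_neg (by omega : ¬ 2 * m₀ < m₀)]
      have h1 : min i (min (2 * m₀ + n - i) (2 * m₀ - 2 * m₀)) = 0 := by omega
      have h2 : min n (i - m₀) = 0 := by omega
      rw [h1, h2, hF0]
      exact hf0
    · intro i hi hi'
      dsimp only
      rw [if_neg (by omega : ¬ 2 * m₀ < m₀)]
      have h1 : min i (min (2 * m₀ + n - i) (2 * m₀ - 2 * m₀)) = 0 := by omega
      have h2 : min n (i - m₀) = n := by omega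
      rw [h1, h2, hF0]
      exact hfn
end

section
/- Let S¹ = {p ∈ ℝ² : |p| = 1} be the unit circle with the Euclidean metric. For every r with 0 < r < 2, S¹ is not r-contractible. -/
open Complex Finset
open scoped Real

namespace CircleNotDContractible

noncomputable def wd (a b : ℂ) : ℝ := (b / a).arg

lemma ne_zero_of_norm_one {a : ℂ} (ha : ‖a‖ = 1) : a ≠ 0 := by
  intro h; rw [h] at ha; simp at ha

lemma wd_exp {a b : ℂ} (ha : ‖a‖ = 1) (hb : ‖b‖ = 1) :
    Complex.exp ((wd a b : ℝ) * I) = b / a := by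
  have h := Complex.norm_mul_exp_arg_mul_I (b / a)
  have : ‖b / a‖ = 1 := by
    simp [ha, hb]
  rw [this] at h
  simpa [wd] using h

lemma abs_wd_le {a b : ℂ} (ha : ‖a‖ = 1) (hb : ‖b‖ = 1) :
    |wd a b| ≤ π / 2 * dist a b := by
  have h1 : InnerProductGeometry.angle b a = |(b / a).arg| :=
    Complex.angle_eq_abs_arg (ne_zero_of_norm_one hb) (ne_zero_of_norm_one ha)
  have h2 := Complex.angle_le_mul_norm_sub hb ha
  rw [h1] at h2
  rw [wd, dist_comm, dist_eq_norm]
  exact h2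

lemma norm_exp_mul_I_sub_one_le (θ : ℝ) : ‖Complex.exp ((θ : ℂ) * I) - 1‖ ≤ |θ| := by
  rw [Complex.exp_mul_I]
  have : Complex.cos θ + Complex.sin θ * I - 1 = ((Real.cos θ - 1 : ℝ) : ℂ) + (Real.sin θ : ℝ) * I := by
    push_cast [Complex.ofReal_cos, Complex.ofReal_sin]; ring
  rw [this, Complex.norm_add_mul_I]
  have hcos := Real.one_sub_sq_div_two_le_cos (x := θ)
  have h : (Real.cos θ - 1)^2 + (Real.sin θ)^2 ≤ θ^2 := by
    have hs := Real.sin_sq_add_cos_sq θ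
    nlinarith [Real.cos_le_one θ]
  calc Real.sqrt ((Real.cos θ - 1)^2 + (Real.sin θ)^2) ≤ Real.sqrt (θ^2) :=
        Real.sqrt_le_sqrt h
    _ = |θ| := Real.sqrt_sq_eq_abs θ

lemma quad {a b c d : ℂ} (ha : ‖a‖ = 1) (hb : ‖b‖ = 1) (hc : ‖c‖ = 1) (hd : ‖d‖ = 1)
    (hlt : |wd a b| + |wd b c| + |wd a d| + |wd d c| < 2 * π) :
    wd a b + wd b c = wd a d + wd d c := by
  have ha0 := ne_zero_of_norm_one ha
  have hb0 := ne_zero_of_norm_one hb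
  have hc0 := ne_zero_of_norm_one hc
  have hd0 := ne_zero_of_norm_one hd
  set s : ℝ := wd a b + wd b c - wd a d - wd d c with hs
  have hexp : Complex.exp ((s : ℂ) * I) = 1 := by
    have : ((s : ℝ) : ℂ) * I = (wd a b : ℝ) * I + (wd b c : ℝ) * I - ((wd a d : ℝ) * I + (wd d c : ℝ) * I) := by
      push_cast [hs]; ring
    rw [this, Complex.exp_sub, Complex.exp_add, Complex.exp_add,
      wd_exp ha hb, wd_exp hb hc, wd_exp ha hd, wd_exp hd hc]
    field_simp
  obtain ⟨n, hn⟩ := Complex.exp_eq_one_iff.mp hexp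
  have hsn : s = n * (2 * π) := by
    have hI : ((s : ℝ) : ℂ) = ((n * (2 * π) : ℝ) : ℂ) := by
      have h2 : (s : ℂ) * I = ((n * (2 * π) : ℝ) : ℂ) * I := by
        rw [hn]; push_cast; ring
      have := mul_right_cancel₀ Complex.I_ne_zero h2
      exact this
    exact_mod_cast hI
  have hslt : |s| < 2 * π := by
    calc |s| ≤ |wd a b| + |wd b c| + |wd a d| + |wd d c| := by
          rw [hs]
          have := abs_add_le (wd a b) (wd b c)
          have h2 := abs_sub (wd a b + wd b c) (wd a d)
          calc |wd a b + wd b c - wd a d - wd d c| ≤ |wd a b + wd b c - wd a d| + |wd d c| := abs_sub _ _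
            _ ≤ |wd a b + wd b c| + |wd a d| + |wd d c| := by
                have := abs_sub (wd a b + wd b c) (wd a d); linarith
            _ ≤ |wd a b| + |wd b c| + |wd a d| + |wd d c| := by
                have := abs_add_le (wd a b) (wd b c); linarith
      _ < 2 * π := hlt
  have hn0 : n = 0 := by
    rcases lt_trichotomy n 0 with h | h | h
    · exfalso
      have : (1 : ℝ) ≤ |(n : ℝ)| := by
        rw [abs_of_neg (by exact_mod_cast h)]
        have : (n : ℝ) ≤ -1 := by exact_mod_cast Int.le_of_lt_add_one (by simpa using h)
        linarith
      rw [hsn, abs_mul, abs_of_pos (by positivity : (0:ℝ) < 2 * π)] at hslt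
      nlinarith [Real.pi_pos]
    · exact h
    · exfalso
      have : (1 : ℝ) ≤ |(n : ℝ)| := by
        rw [abs_of_pos (by exact_mod_cast h)]
        exact_mod_cast h
      rw [hsn, abs_mul, abs_of_pos (by positivity : (0:ℝ) < 2 * π)] at hslt
      nlinarith [Real.pi_pos]
  have : s = 0 := by rw [hsn, hn0]; simp
  linarith [hs ▸ this]

/-- sample points on the circle -/
noncomputable def pt (N k : ℕ) : ℂ := Complex.exp (((2 * π * k / N : ℝ) : ℂ) * I)

lemma pt_norm (N k : ℕ) : ‖pt N k‖ = 1 := by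
  rw [pt]
  have : ((2 * π * k / N : ℝ) : ℂ) * I = ((2 * π * k / N : ℝ) : ℂ) * I := rfl
  exact Complex.norm_exp_ofReal_mul_I _

lemma pt_zero (N : ℕ) : pt N 0 = 1 := by simp [pt]

lemma pt_last {N : ℕ} (hN : N ≠ 0) : pt N N = 1 := by
  have : (2 * π * N / N : ℝ) = 2 * π := by
    field_simp
  rw [pt, this]
  have : ((2 * π : ℝ) : ℂ) * I = 2 * π * I := by push_cast; ring
  rw [this, Complex.exp_two_pi_mul_I]

lemma pt_succ (N k : ℕ) : pt N (k + 1) = pt N k * Complex.exp (((2 * π / N : ℝ) : ℂ) * I) := by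
  rw [pt, pt, ← Complex.exp_add]
  congr 1
  push_cast
  ring

lemma wsum_exp (g : ℕ → ℂ) (hg : ∀ k, ‖g k‖ = 1) (N : ℕ) :
    Complex.exp (((∑ k ∈ Finset.range N, wd (g k) (g (k + 1)) : ℝ) : ℂ) * I) = g N / g 0 := by
  induction N with
  | zero => simp [div_self (ne_zero_of_norm_one (hg 0))]
  | succ n ih =>
      rw [Finset.sum_range_succ, Complex.ofReal_add, add_mul, Complex.exp_add, ih,
        wd_exp (hg n) (hg (n + 1))]
      rw [div_mul_div_comm, mul_comm (g n), mul_div_mul_right _ _ (ne_zero_of_norm_one (hg n))]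

lemma pt_dist {N : ℕ} (hN : N ≠ 0) (k : ℕ) : dist (pt N k) (pt N (k + 1)) ≤ 2 * π / N := by
  rw [dist_eq_norm, pt_succ]
  have : pt N k - pt N k * Complex.exp (((2 * π / N : ℝ) : ℂ) * I)
      = - (pt N k * (Complex.exp (((2 * π / N : ℝ) : ℂ) * I) - 1)) := by ring
  rw [this, norm_neg, norm_mul, pt_norm, one_mul]
  have h := norm_exp_mul_I_sub_one_le (2 * π / N)
  rwa [_root_.abs_of_nonneg (by positivity)] at h

lemma wd_pt {N : ℕ} (hN : 3 ≤ N) (k : ℕ) : wd (pt N k) (pt N (k + 1)) = 2 * π / N := by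
  have hN0 : (0 : ℝ) < N := by exact_mod_cast (by omega : 0 < N)
  have hdiv : pt N (k + 1) / pt N k = Complex.exp (((2 * π / N : ℝ) : ℂ) * I) := by
    rw [pt_succ, mul_comm, mul_div_assoc, div_self (ne_zero_of_norm_one (pt_norm N k)), mul_one]
  rw [wd, hdiv, Complex.arg_exp_mul_I]
  apply (toIocMod_eq_self _).2
  constructor
  · have : (0:ℝ) < 2 * π / N := by positivity
    linarith [Real.pi_pos]
  · have h3 : (3:ℝ) ≤ N := by exact_mod_cast hN
    have : 2 * π / N ≤ 2 * π / 3 := by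
      apply div_le_div_of_nonneg_left (by positivity) (by norm_num) h3
    have hπ := Real.pi_pos
    nlinarith

/-- discrete winding sum -/
noncomputable def W (f : ℂ → ℂ) (N : ℕ) : ℝ :=
  ∑ k ∈ Finset.range N, wd (f (pt N k)) (f (pt N (k + 1)))

lemma W_id {N : ℕ} (hN : 3 ≤ N) : W (fun z => z) N = 2 * π := by
  have hN0 : (N:ℝ) ≠ 0 := by positivity
  simp only [W]
  rw [Finset.sum_congr rfl (fun k _ => wd_pt hN k), Finset.sum_const, Finset.card_range,
    nsmul_eq_mul]
  field_simp

lemma W_const (c : ℂ) (hc : c ≠ 0) (N : ℕ) : W (fun _ => c) N = 0 := by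
  simp [W, wd, div_self hc]

lemma W_eq {r : ℝ} (hr0 : 0 ≤ r) {N : ℕ} (hN3 : 3 ≤ N)
    (hN : 2 * π ^ 2 / N + π * r < 2 * π)
    {f g : ℂ → ℂ}
    (hfu : ∀ z, ‖z‖ = 1 → ‖f z‖ = 1) (hgu : ∀ z, ‖z‖ = 1 → ‖g z‖ = 1)
    (hfl : ∀ z w, ‖z‖ = 1 → ‖w‖ = 1 → dist (f z) (f w) ≤ dist z w)
    (hgl : ∀ z w, ‖z‖ = 1 → ‖w‖ = 1 → dist (g z) (g w) ≤ dist z w)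
    (hfg : ∀ z, ‖z‖ = 1 → dist (f z) (g z) ≤ r) :
    W f N = W g N := by
  have hN0 : N ≠ 0 := by omega
  have hN0' : (0:ℝ) < N := by exact_mod_cast Nat.pos_of_ne_zero hN0
  have hπ := Real.pi_pos
  -- termwise equality
  have key : ∀ k, wd (f (pt N k)) (f (pt N (k + 1))) - wd (g (pt N k)) (g (pt N (k + 1)))
      = wd (f (pt N k)) (g (pt N k)) - wd (f (pt N (k + 1))) (g (pt N (k + 1))) := by
    intro k
    set a := f (pt N k); set b := f (pt N (k + 1)); set c := g (pt N (k + 1)); set d := g (pt N k)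
    have hpk := pt_norm N k
    have hpk1 := pt_norm N (k + 1)
    have ha : ‖a‖ = 1 := hfu _ hpk
    have hb : ‖b‖ = 1 := hfu _ hpk1
    have hc : ‖c‖ = 1 := hgu _ hpk1
    have hd : ‖d‖ = 1 := hgu _ hpk
    have hhorf : |wd a b| ≤ π ^ 2 / N := by
      calc |wd a b| ≤ π / 2 * dist a b := abs_wd_le ha hb
        _ ≤ π / 2 * (2 * π / N) := by
            have := (hfl _ _ hpk hpk1).trans (pt_dist hN0 k)
            nlinarith
        _ = π ^ 2 / N := by field_simp
    have hhorg : |wd d c| ≤ π ^ 2 / N := by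
      calc |wd d c| ≤ π / 2 * dist d c := abs_wd_le hd hc
        _ ≤ π / 2 * (2 * π / N) := by
            have := (hgl _ _ hpk hpk1).trans (pt_dist hN0 k)
            nlinarith
        _ = π ^ 2 / N := by field_simp
    have hver1 : |wd a d| ≤ π / 2 * r := by
      calc |wd a d| ≤ π / 2 * dist a d := abs_wd_le ha hd
        _ ≤ π / 2 * r := by have := hfg _ hpk; nlinarith
    have hver2 : |wd b c| ≤ π / 2 * r := by
      calc |wd b c| ≤ π / 2 * dist b c := abs_wd_le hb hc
        _ ≤ π / 2 * r := by have := hfg _ hpk1; nlinarith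
    have hq := quad ha hb hc hd (by
      have : 2 * (π ^ 2 / N) + 2 * (π / 2 * r) < 2 * π := by
        rw [div_add' _ _ _ (ne_of_gt hN0')] at hN
        calc 2 * (π ^ 2 / N) + 2 * (π / 2 * r) = 2 * π ^ 2 / N + π * r := by ring
          _ < 2 * π := by rw [div_add' _ _ _ (ne_of_gt hN0')]; exact hN
      linarith)
    linarith [hq]
  have hsum : W f N - W g N
      = ∑ k ∈ Finset.range N, (wd (f (pt N k)) (g (pt N k)) - wd (f (pt N (k+1))) (g (pt N (k+1)))) := by
    rw [W, W, ← Finset.sum_sub_distrib]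
    exact Finset.sum_congr rfl fun k _ => key k
  have htel : ∑ k ∈ Finset.range N, (wd (f (pt N k)) (g (pt N k)) - wd (f (pt N (k+1))) (g (pt N (k+1))))
      = wd (f (pt N 0)) (g (pt N 0)) - wd (f (pt N N)) (g (pt N N)) :=
    Finset.sum_range_sub' (fun k => wd (f (pt N k)) (g (pt N k))) N
  rw [htel, pt_zero, pt_last hN0, sub_self] at hsum
  linarith

lemma W_congr {f g : ℂ → ℂ} (h : ∀ z, ‖z‖ = 1 → f z = g z) (N : ℕ) : W f N = W g N := by
  unfold W
  exact Finset.sum_congr rfl fun k _ => by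
    rw [h _ (pt_norm N k), h _ (pt_norm N (k + 1))]


end CircleNotDContractible

open CircleNotDContractible

/-- For every `0 < r < 2`, the unit circle `S¹ ⊆ ℝ²` is not `r`-contractible. -/
theorem circle_not_dContractible_of_lt_two (r : ℝ) (hr0 : 0 < r) (hr2 : r < 2) :
    ¬ DContractible r ↥(Metric.sphere (0 : EuclideanSpace ℝ (Fin 2)) 1) := by
  rintro ⟨x₀, m, F, h0, hm, hlip, hdist⟩
  have hπ := Real.pi_pos
  set e : ℂ ≃ₗᵢ[ℝ] EuclideanSpace ℝ (Fin 2) := Complex.orthonormalBasisOneI.repr with he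
  have hmem : ∀ z : ℂ, ‖z‖ = 1 → e z ∈ Metric.sphere (0 : EuclideanSpace ℝ (Fin 2)) 1 := by
    intro z hz
    rw [mem_sphere_zero_iff_norm, e.norm_map, hz]
  set G : ℕ → ℂ → ℂ := fun i z =>
    if h : ‖z‖ = 1 then e.symm ((F ⟨e z, hmem z h⟩ i : Metric.sphere (0 : EuclideanSpace ℝ (Fin 2)) 1) : EuclideanSpace ℝ (Fin 2)) else 1
    with hG
  have hGval : ∀ i z (h : ‖z‖ = 1), G i z = e.symm ((F ⟨e z, hmem z h⟩ i : Metric.sphere (0 : EuclideanSpace ℝ (Fin 2)) 1) : EuclideanSpace ℝ (Fin 2)) := by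
    intro i z h
    simp only [hG, dif_pos h]
  have hGu : ∀ i z, ‖z‖ = 1 → ‖G i z‖ = 1 := by
    intro i z h
    rw [hGval i z h, e.symm.norm_map]
    exact mem_sphere_zero_iff_norm.mp (F ⟨e z, hmem z h⟩ i).2
  have hGl : ∀ i ≤ m, ∀ z w, ‖z‖ = 1 → ‖w‖ = 1 → dist (G i z) (G i w) ≤ dist z w := by
    intro i hi z w hz hw
    rw [hGval i z hz, hGval i w hw, e.symm.dist_map, ← Subtype.dist_eq]
    calc dist (F ⟨e z, hmem z hz⟩ i) (F ⟨e w, hmem w hw⟩ i)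
        ≤ 1 * dist (⟨e z, hmem z hz⟩ : Metric.sphere (0 : EuclideanSpace ℝ (Fin 2)) 1) ⟨e w, hmem w hw⟩ :=
          hlip i hi _ _
      _ = dist (e z) (e w) := by rw [one_mul, Subtype.dist_eq]
      _ = dist z w := e.dist_map z w
  have hGr : ∀ i, i + 1 ≤ m → ∀ z, ‖z‖ = 1 → dist (G i z) (G (i + 1) z) ≤ r := by
    intro i hi z hz
    rw [hGval i z hz, hGval (i + 1) z hz, e.symm.dist_map, ← Subtype.dist_eq]
    have := hdist ⟨e z, hmem z hz⟩ i (by omega) (i + 1) hi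
    have habs : |(i : ℝ) - ((i : ℕ) + 1 : ℕ)| = 1 := by
      push_cast; rw [abs_of_nonpos] <;> [ring; linarith]
    rw [habs, mul_one] at this
    exact this
  have hG0 : ∀ z, ‖z‖ = 1 → G 0 z = z := by
    intro z hz
    rw [hGval 0 z hz, h0]
    simp
  set c : ℂ := e.symm (x₀ : EuclideanSpace ℝ (Fin 2)) with hc
  have hGm : ∀ z, ‖z‖ = 1 → G m z = c := by
    intro z hz
    rw [hGval m z hz, hm]
  have hcn : ‖c‖ = 1 := by
    rw [hc, e.symm.norm_map]
    exact mem_sphere_zero_iff_norm.mp x₀.2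
  -- choose N
  set N : ℕ := max 3 (⌈2 * π / (2 - r)⌉₊ + 1) with hNdef
  have hN3 : 3 ≤ N := le_max_left _ _
  have hN0' : (0 : ℝ) < N := by
    have : (3:ℝ) ≤ N := by exact_mod_cast hN3
    linarith
  have hNgt : 2 * π / (2 - r) < (N : ℝ) := by
    have h1 : 2 * π / (2 - r) ≤ (⌈2 * π / (2 - r)⌉₊ : ℝ) := Nat.le_ceil _
    have h2 : (⌈2 * π / (2 - r)⌉₊ + 1 : ℕ) ≤ N := le_max_right _ _
    have h3 : ((⌈2 * π / (2 - r)⌉₊ + 1 : ℕ) : ℝ) ≤ N := by exact_mod_cast h2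
    push_cast at h3
    linarith
  have hNin : 2 * π ^ 2 / N + π * r < 2 * π := by
    have h2r : (0:ℝ) < 2 - r := by linarith
    have : 2 * π < (2 - r) * N := by
      rw [div_lt_iff₀ h2r] at hNgt
      linarith
    rw [div_add' _ _ _ (ne_of_gt hN0'), div_lt_iff₀ hN0']
    nlinarith
  -- induction
  have hind : ∀ i, i ≤ m → W (G i) N = 2 * π := by
    intro i
    induction i with
    | zero =>
        intro _
        rw [W_congr hG0 N, W_id hN3]
    | succ n ih =>
        intro hn
        rw [← ih (by omega)]
        exact (W_eq hr0.le hN3 hNin (hGu n) (hGu (n+1)) (hGl n (by omega)) (hGl (n+1) hn)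
          (hGr n hn)).symm
  have h2π : W (G m) N = 2 * π := hind m le_rfl
  rw [W_congr hGm N, W_const c (ne_zero_of_norm_one hcn) N] at h2π
  linarith
end

section
/- Let X be a metric space and r > 0. If there exists an r-motion planning on all of X × X (i.e., a natural number m and a 1-Lipschitz map s : X × X → X^{{0,…,m}} assigning to each pair (x,y) an r-path from x to y), then X is r-contractible. -/
/-- `s` is an `r`-motion planning on `A ⊆ X × X` with paths of length `m`:
each `s(x,y)` is an `r`-path from `x` to `y`, and `s` is `1`-Lipschitz from the
`ℓ¹`-metric on `X × X` to the uniform metric on paths. -/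
def MotionPlan {X : Type*} [MetricSpace X] (r : ℝ) (A : Set (X × X)) (m : ℕ)
    (s : X × X → ℕ → X) : Prop :=
  (∀ p ∈ A, s p 0 = p.1 ∧ s p m = p.2 ∧ ∀ i < m, dist (s p i) (s p (i + 1)) ≤ r) ∧
  (∀ p ∈ A, ∀ q ∈ A, ∀ i ≤ m, dist (s p i) (s q i) ≤ dist p.1 q.1 + dist p.2 q.2)

/-- If there is an `r`-motion planning on all of `X × X`, then `X` is `r`-contractible. -/
theorem dContractible_of_motionPlan {X : Type*} [MetricSpace X] [Nonempty X]
    (r : ℝ) (hr : 0 < r)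
    (h : ∃ (m : ℕ) (s : X × X → ℕ → X), MotionPlan r (Set.univ : Set (X × X)) m s) :
    DContractible r X := by
  obtain ⟨m, s, hpath, hlip⟩ := h
  obtain ⟨x₀⟩ := ‹Nonempty X›
  have key : ∀ p : X × X, ∀ i j : ℕ, i ≤ j → j ≤ m →
      dist (s p i) (s p j) ≤ r * ((j : ℝ) - i) := by
    intro p i j hij hjm
    induction j, hij using Nat.le_induction with
    | base => simp
    | succ j hij ih =>
      have hjm' : j ≤ m := Nat.le_of_succ_le hjm
      have h1 := ih hjm'
      have h2 := (hpath p trivial).2.2 j (Nat.lt_of_succ_le hjm)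
      calc dist (s p i) (s p (j + 1)) ≤ dist (s p i) (s p j) + dist (s p j) (s p (j + 1)) :=
            dist_triangle _ _ _
        _ ≤ r * ((j : ℝ) - i) + r := by linarith
        _ = r * (((j : ℕ) + 1 : ℝ) - i) := by ring
        _ = r * (((j + 1 : ℕ) : ℝ) - i) := by push_cast; ring
  refine ⟨x₀, m, fun x i => s (x, x₀) i, fun x => (hpath (x, x₀) trivial).1,
    fun x => (hpath (x, x₀) trivial).2.1, ?_, ?_⟩
  · intro i hi x x'
    have := hlip (x, x₀) trivial (x', x₀) trivial i hi
    simpa using this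
  · intro x i hi j hj
    rcases le_total i j with hij | hij
    · have := key (x, x₀) i j hij hj
      have habs : |(i : ℝ) - j| = (j : ℝ) - i := by
        rw [abs_sub_comm, abs_of_nonneg]
        simp [hij]
      rw [habs]; exact this
    · have := key (x, x₀) j i hij hi
      have habs : |(i : ℝ) - j| = (i : ℝ) - j := by
        rw [abs_of_nonneg]; simp [hij]
      rw [dist_comm, habs]; exact this
end

section
/- Let X be a metric space and r > 0. If X is r-contractible, then there exists an r-motion planning on all of X × X: there are a natural number M and a 1-Lipschitz map s : X × X → X^{{0,…,M}} such that for every (x,y) ∈ X × X, s(x,y) is an r-path with s(x,y)(0) = x and s(x,y)(M) = y. -/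
/-- If `X` is `r`-contractible, then there exists an `r`-motion planning
on all of `X × X`. -/
theorem motionPlan_of_dContractible {X : Type*} [MetricSpace X]
    (r : ℝ) (hr : 0 < r) (h : DContractible r X) :
    ∃ (M : ℕ) (s : X × X → ℕ → X), MotionPlan r (Set.univ : Set (X × X)) M s := by
  obtain ⟨x₀, m, F, hF0, hFm, hLip, hStep⟩ := h
  refine ⟨2*m, fun p i => if i ≤ m then F p.1 i else F p.2 (2*m - i), ?_, ?_⟩
  · intro p _
    refine ⟨by simp [hF0], ?_, ?_⟩
    · by_cases hm : 2*m ≤ m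
      · have hm0 : m = 0 := by omega
        simp only [hm, if_pos]
        have h1 : F p.1 (2*m) = x₀ := by rw [show 2*m = m by omega]; exact hFm p.1
        have h2 : F p.2 0 = p.2 := hF0 p.2
        have h3 : F p.2 0 = x₀ := by rw [← hm0]; exact hFm p.2
        rw [h1, ← h3, h2]
      · simp only [hm, if_neg, not_false_iff]
        rw [show 2*m - (2*m) = 0 by omega, hF0]; rfl
    · intro i hi
      rcases lt_trichotomy i m with hlt | heq | hgt
      · have h1 : i ≤ m := le_of_lt hlt
        have h2 : i + 1 ≤ m := hlt
        simp only [h1, h2, if_pos]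
        calc dist (F p.1 i) (F p.1 (i+1)) ≤ r * |(i:ℝ) - (i+1:ℕ)| := hStep p.1 i h1 (i+1) h2
          _ = r := by push_cast; rw [show (i:ℝ) - (i+1) = -1 by ring]; simp
      · subst heq
        have hm1 : 1 ≤ i := by omega
        have h1 : ¬ (i + 1 ≤ i) := by omega
        simp only [le_refl, if_pos, h1, if_neg, not_false_iff]
        rw [show 2*i - (i+1) = i - 1 by omega, hFm p.1, ← hFm p.2]
        calc dist (F p.2 i) (F p.2 (i-1)) ≤ r * |(i:ℝ) - ((i-1:ℕ):ℝ)| :=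
              hStep p.2 i le_rfl (i-1) (by omega)
          _ = r := by
              rw [Nat.cast_sub hm1]
              push_cast
              rw [show (i:ℝ) - (i - 1) = 1 by ring]; simp
      · have h1 : ¬ (i ≤ m) := by omega
        have h2 : ¬ (i + 1 ≤ m) := by omega
        simp only [h1, h2, if_neg, not_false_iff]
        have ha : 2*m - i ≤ m := by omega
        have hb : 2*m - (i+1) ≤ m := by omega
        calc dist (F p.2 (2*m-i)) (F p.2 (2*m-(i+1)))
              ≤ r * |((2*m-i:ℕ):ℝ) - ((2*m-(i+1):ℕ):ℝ)| := hStep p.2 _ ha _ hb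
          _ = r := by
              rw [Nat.cast_sub (by omega), Nat.cast_sub (by omega)]
              push_cast
              rw [show (2*(m:ℝ) - i) - (2*m - (i+1)) = 1 by ring]; simp
  · intro p _ q _ i _
    by_cases hi : i ≤ m
    · simp only [hi, if_pos]
      calc dist (F p.1 i) (F q.1 i) ≤ 1 * dist p.1 q.1 := hLip i hi p.1 q.1
        _ ≤ dist p.1 q.1 + dist p.2 q.2 := by simp [dist_nonneg]
    · simp only [hi, if_neg, not_false_iff]
      calc dist (F p.2 (2*m-i)) (F q.2 (2*m-i)) ≤ 1 * dist p.2 q.2 :=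
            hLip _ (by omega) p.2 q.2
        _ ≤ dist p.1 q.1 + dist p.2 q.2 := by
            have := dist_nonneg (x := p.1) (y := q.1); linarith
end

section
/- Let X, Y be metric spaces, r, r₁, r₂ > 0 with r₁·r₂ ≤ 1, let f : X → Y be r₁-Lipschitz and g : Y → X be r₂-Lipschitz, and suppose f ∘ g is (1,r)-homotopic to id_Y and g ∘ f is (1,r)-homotopic to id_X. If X × X can be covered by l open subsets each admitting an (r/r₁)-motion planning, then Y × Y can be covered by l open subsets each admitting an r-motion planning. In particular TC_r(Y) ≤ TC_{r/r₁}(X). -/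
/-- An `s`-Lipschitz map between metric spaces. -/
def IsLip {X Y : Type*} [MetricSpace X] [MetricSpace Y] (s : ℝ) (f : X → Y) : Prop :=
  ∀ x x', dist (f x) (f x') ≤ s * dist x x'

/-- `A` admits an `r`-motion planning. -/
def HasMotionPlan {X : Type*} [MetricSpace X] (r : ℝ) (A : Set (X × X)) : Prop :=
  ∃ (m : ℕ) (s : X × X → ℕ → X), MotionPlan r A m s

/-- `X × X` is covered by `l` open subsets each admitting an `r`-motion planning. -/
def CoverMP (X : Type*) [MetricSpace X] (r : ℝ) (l : ℕ) : Prop :=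
  ∃ U : Fin l → Set (X × X), (∀ i, IsOpen (U i)) ∧ (⋃ i, U i) = Set.univ ∧
    ∀ i, HasMotionPlan r (U i)

/-- The discrete topological complexity `TC_r(X)`. -/
noncomputable def dTC (r : ℝ) (X : Type*) [MetricSpace X] : ℕ∞ :=
  sInf {n : ℕ∞ | ∃ l : ℕ, n = l ∧ CoverMP X r l}

/-- If `f : X → Y` is `r₁`-Lipschitz, `g : Y → X` is `r₂`-Lipschitz, `r₁·r₂ ≤ 1`,
`f ∘ g ≃_{(1,r)} id_Y` and `g ∘ f ≃_{(1,r)} id_X`, then any cover of `X × X` by `l` open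
subsets with `(r/r₁)`-motion plannings yields a cover of `Y × Y` by `l` open subsets
with `r`-motion plannings; in particular `TC_r(Y) ≤ TC_{r/r₁}(X)`. -/
theorem dTC_le_of_dHomotopyEquiv {X Y : Type*} [MetricSpace X] [MetricSpace Y]
    (r r₁ r₂ : ℝ) (hr : 0 < r) (hr₁ : 0 < r₁) (hr₂ : 0 < r₂) (hr₁₂ : r₁ * r₂ ≤ 1)
    (f : X → Y) (g : Y → X) (hf : IsLip r₁ f) (hg : IsLip r₂ g)
    (hfg : DHomotopic 1 r (f ∘ g) (id : Y → Y))
    (hgf : DHomotopic 1 r (g ∘ f) (id : X → X)) :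
    (∀ l : ℕ, CoverMP X (r / r₁) l → CoverMP Y r l) ∧ dTC r Y ≤ dTC (r / r₁) X := by

  have main : ∀ l : ℕ, CoverMP X (r / r₁) l → CoverMP Y r l := by
    intro l hl
    obtain ⟨U, hUopen, hUcover, hUmp⟩ := hl
    obtain ⟨m₀, F, hF0, hFm, hFlip, hFstep⟩ := hfg
    have hgc : Continuous g :=
      (LipschitzWith.of_dist_le_mul (K := r₂.toNNReal)
        (fun x y => by rw [Real.coe_toNNReal r₂ hr₂.le]; exact hg x y)).continuous
    have hGc : Continuous (fun p : Y × Y => ((g p.1, g p.2) : X × X)) :=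
      (hgc.comp continuous_fst).prodMk (hgc.comp continuous_snd)
    refine ⟨fun i => (fun p : Y × Y => ((g p.1, g p.2) : X × X)) ⁻¹' (U i),
      fun i => (hUopen i).preimage hGc, ?_, ?_⟩
    · ext p
      simp only [Set.mem_iUnion, Set.mem_preimage, Set.mem_univ, iff_true]
      have : ((g p.1, g p.2) : X × X) ∈ ⋃ i, U i := by rw [hUcover]; trivial
      exact Set.mem_iUnion.mp this
    · intro i
      obtain ⟨m, s, hs1, hs2⟩ := hUmp i
      set M := m₀ + m + m₀ with hM
      set t : Y × Y → ℕ → Y := fun p k =>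
        if k < m₀ then F p.1 (m₀ - k)
        else if k < m₀ + m then f (s (g p.1, g p.2) (k - m₀))
        else F p.2 (k - m₀ - m) with ht
      refine ⟨M, t, ?_, ?_⟩
      · -- path conditions
        intro p hp
        have hq : ((g p.1, g p.2) : X × X) ∈ U i := hp
        obtain ⟨hq0, hqm, hqstep⟩ := hs1 _ hq
        have hA : ∀ k ≤ m₀, t p k = F p.1 (m₀ - k) := by
          intro k hk
          rcases lt_or_eq_of_le hk with h | h
          · simp only [ht, if_pos h]
          · rw [h]
            simp only [ht, lt_irrefl, if_false, Nat.sub_self]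
            by_cases hm : m₀ < m₀ + m
            · rw [if_pos hm, hq0, hF0]; rfl
            · rw [if_neg hm, Nat.zero_sub, hF0, hF0]
              have hm0 : m = 0 := by omega
              have : g p.1 = g p.2 := by
                have := hqm; rw [hm0, hq0] at this; exact this
              simp [Function.comp, this]
        have hB : ∀ k, m₀ ≤ k → k ≤ m₀ + m → t p k = f (s (g p.1, g p.2) (k - m₀)) := by
          intro k hk1 hk2
          rcases lt_or_eq_of_le hk2 with h | h
          · simp only [ht]
            rw [if_neg (by omega), if_pos h]
          · rw [h]
            simp only [ht]
            rw [if_neg (by omega), if_neg (by omega)]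
            have : m₀ + m - m₀ = m := by omega
            rw [this, hqm, Nat.sub_self, hF0]
            rfl
        have hC : ∀ k, m₀ + m ≤ k → t p k = F p.2 (k - m₀ - m) := by
          intro k hk
          simp only [ht]
          rw [if_neg (by omega), if_neg (by omega)]
        refine ⟨?_, ?_, ?_⟩
        · rw [hA 0 (Nat.zero_le _), Nat.sub_zero, hFm]; rfl
        · rw [hC M (by omega)]
          have : M - m₀ - m = m₀ := by omega
          rw [this, hFm]; rfl
        · intro k hk
          rcases le_or_gt (k + 1) m₀ with h1 | h1
          · rw [hA k (by omega), hA (k+1) h1]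
            have key := hFstep p.1 (m₀ - k) (by omega) (m₀ - (k+1)) (by omega)
            have h2 : m₀ - k = (m₀ - (k + 1)) + 1 := by omega
            calc dist (F p.1 (m₀ - k)) (F p.1 (m₀ - (k+1)))
                ≤ r * |((m₀ - k : ℕ) : ℝ) - ((m₀ - (k+1) : ℕ) : ℝ)| := key
              _ = r := by rw [h2]; push_cast; simp
          · rcases le_or_gt (k + 1) (m₀ + m) with h2 | h2
            · rw [hB k (by omega) (by omega), hB (k+1) (by omega) h2]
              have ha : k + 1 - m₀ = (k - m₀) + 1 := by omega
              rw [ha]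
              calc dist (f (s (g p.1, g p.2) (k - m₀))) (f (s (g p.1, g p.2) (k - m₀ + 1)))
                  ≤ r₁ * dist (s (g p.1, g p.2) (k - m₀)) (s (g p.1, g p.2) (k - m₀ + 1)) :=
                    hf _ _
                _ ≤ r₁ * (r / r₁) := by
                    apply mul_le_mul_of_nonneg_left (hqstep _ (by omega)) hr₁.le
                _ = r := by field_simp
            · rw [hC k (by omega), hC (k+1) (by omega)]
              have key := hFstep p.2 (k - m₀ - m) (by omega) (k + 1 - m₀ - m) (by omega)
              have h3 : k + 1 - m₀ - m = (k - m₀ - m) + 1 := by omega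
              calc dist (F p.2 (k - m₀ - m)) (F p.2 (k + 1 - m₀ - m))
                  ≤ r * |((k - m₀ - m : ℕ) : ℝ) - ((k + 1 - m₀ - m : ℕ) : ℝ)| := key
                _ = r := by rw [h3]; push_cast; simp [abs_sub_comm]
      · -- 1-Lipschitz condition
        intro p hp q hq k hk
        have hpU : ((g p.1, g p.2) : X × X) ∈ U i := hp
        have hqU : ((g q.1, g q.2) : X × X) ∈ U i := hq
        have d1 : (0:ℝ) ≤ dist p.1 q.1 := dist_nonneg
        have d2 : (0:ℝ) ≤ dist p.2 q.2 := dist_nonneg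
        simp only [ht]
        by_cases h1 : k < m₀
        · rw [if_pos h1, if_pos h1]
          calc dist (F p.1 (m₀ - k)) (F q.1 (m₀ - k))
              ≤ 1 * dist p.1 q.1 := hFlip _ (by omega) _ _
            _ ≤ dist p.1 q.1 + dist p.2 q.2 := by linarith
        · rw [if_neg h1, if_neg h1]
          by_cases h2 : k < m₀ + m
          · rw [if_pos h2, if_pos h2]
            calc dist (f (s (g p.1, g p.2) (k - m₀))) (f (s (g q.1, g q.2) (k - m₀)))
                ≤ r₁ * dist (s (g p.1, g p.2) (k - m₀)) (s (g q.1, g q.2) (k - m₀)) := hf _ _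
              _ ≤ r₁ * (dist (g p.1) (g q.1) + dist (g p.2) (g q.2)) := by
                  apply mul_le_mul_of_nonneg_left _ hr₁.le
                  exact hs2 _ hpU _ hqU _ (by omega)
              _ ≤ r₁ * (r₂ * dist p.1 q.1 + r₂ * dist p.2 q.2) := by
                  apply mul_le_mul_of_nonneg_left _ hr₁.le
                  exact add_le_add (hg _ _) (hg _ _)
              _ = (r₁ * r₂) * (dist p.1 q.1 + dist p.2 q.2) := by ring
              _ ≤ 1 * (dist p.1 q.1 + dist p.2 q.2) := by
                  apply mul_le_mul_of_nonneg_right hr₁₂ (by linarith)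
              _ = dist p.1 q.1 + dist p.2 q.2 := one_mul _
          · rw [if_neg h2, if_neg h2]
            calc dist (F p.2 (k - m₀ - m)) (F q.2 (k - m₀ - m))
                ≤ 1 * dist p.2 q.2 := hFlip _ (by omega) _ _
              _ ≤ dist p.1 q.1 + dist p.2 q.2 := by linarith
  refine ⟨main, ?_⟩
  apply sInf_le_sInf
  rintro n ⟨l, rfl, hl⟩
  exact ⟨l, rfl, main l hl⟩
end

section
/- Let X, Y be metric spaces, r > 0, and suppose X and Y have the same strictly r-homotopy type, i.e., there exist 1-Lipschitz maps f : X → Y and g : Y → X with f ∘ g (1,r)-homotopic to id_Y and g ∘ f (1,r)-homotopic to id_X. Then for every l, X × X can be covered by l open subsets each admitting an r-motion planning if and only if Y × Y can; hence TC_r(X) = TC_r(Y). -/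
section Cat
variable {Y : Type*} [MetricSpace Y]

/-- Concatenation of discrete paths. -/
def cat (m₁ : ℕ) (γ₁ γ₂ : ℕ → Y) : ℕ → Y := fun i => if i ≤ m₁ then γ₁ i else γ₂ (i - m₁)

lemma cat_zero (m₁ : ℕ) (γ₁ γ₂ : ℕ → Y) : cat m₁ γ₁ γ₂ 0 = γ₁ 0 := by simp [cat]

lemma cat_last {m₁ m₂ : ℕ} {γ₁ γ₂ : ℕ → Y} (hj : γ₁ m₁ = γ₂ 0) :
    cat m₁ γ₁ γ₂ (m₁ + m₂) = γ₂ m₂ := by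
  unfold cat
  rcases Nat.eq_zero_or_pos m₂ with h | h
  · subst h; simp [hj]
  · rw [if_neg (by omega)]; congr 1; omega

lemma cat_step {r : ℝ} {m₁ m₂ : ℕ} {γ₁ γ₂ : ℕ → Y}
    (h₁ : ∀ i < m₁, dist (γ₁ i) (γ₁ (i + 1)) ≤ r)
    (h₂ : ∀ i < m₂, dist (γ₂ i) (γ₂ (i + 1)) ≤ r) (hj : γ₁ m₁ = γ₂ 0) :
    ∀ i < m₁ + m₂, dist (cat m₁ γ₁ γ₂ i) (cat m₁ γ₁ γ₂ (i + 1)) ≤ r := by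
  intro i hi
  rcases le_or_gt (i + 1) m₁ with h | h
  · simp only [cat, if_pos h, if_pos (by omega : i ≤ m₁)]
    exact h₁ i (by omega)
  rcases le_or_gt i m₁ with h' | h'
  · have hi' : i = m₁ := by omega
    subst hi'
    simp only [cat, if_pos le_rfl, if_neg (by omega : ¬ i + 1 ≤ i), hj]
    have h0 : i + 1 - i = 0 + 1 := by omega
    rw [h0]
    exact h₂ 0 (by omega)
  · simp only [cat, if_neg (by omega : ¬ i ≤ m₁), if_neg (by omega : ¬ i + 1 ≤ m₁)]
    have h0 : i + 1 - m₁ = (i - m₁) + 1 := by omega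
    rw [h0]
    exact h₂ (i - m₁) (by omega)

lemma cat_dist {D : ℝ} {m₁ m₂ : ℕ} {γ₁ γ₂ δ₁ δ₂ : ℕ → Y}
    (h₁ : ∀ i ≤ m₁, dist (γ₁ i) (δ₁ i) ≤ D)
    (h₂ : ∀ i ≤ m₂, dist (γ₂ i) (δ₂ i) ≤ D) :
    ∀ i ≤ m₁ + m₂, dist (cat m₁ γ₁ γ₂ i) (cat m₁ δ₁ δ₂ i) ≤ D := by
  intro i hi
  unfold cat
  rcases le_or_gt i m₁ with h | h
  · rw [if_pos h, if_pos h]; exact h₁ i h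
  · rw [if_neg (by omega), if_neg (by omega)]; exact h₂ (i - m₁) (by omega)

end Cat

lemma coverMP_of_dhe {X Y : Type*} [MetricSpace X] [MetricSpace Y]
    {r : ℝ} (f : X → Y) (g : Y → X) (hf : IsLip 1 f) (hg : IsLip 1 g)
    (hfg : DHomotopic 1 r (f ∘ g) (id : Y → Y)) {l : ℕ}
    (h : CoverMP X r l) : CoverMP Y r l := by
  obtain ⟨U, hUo, hUc, hUmp⟩ := h
  obtain ⟨M, F, hF0, hFM, hFlip, hFstep⟩ := hfg
  have hgc : Continuous g :=
    (LipschitzWith.of_dist_le_mul (K := 1) fun x y => by simpa using hg x y).continuous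
  have hGc : Continuous fun p : Y × Y => ((g p.1, g p.2) : X × X) :=
    (hgc.comp continuous_fst).prodMk (hgc.comp continuous_snd)
  refine ⟨fun k => (fun p : Y × Y => ((g p.1, g p.2) : X × X)) ⁻¹' U k, fun k => (hUo k).preimage hGc, ?_, ?_⟩
  · ext p
    simp only [Set.mem_iUnion, Set.mem_preimage, Set.mem_univ, iff_true]
    have : ((g p.1, g p.2) : X × X) ∈ ⋃ i, U i := hUc ▸ Set.mem_univ _
    exact Set.mem_iUnion.mp this
  · intro k
    obtain ⟨m, s, hsA, hsL⟩ := hUmp k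
    -- auxiliary cast fact
    have habs : ∀ i j : ℕ, i ≤ M → j ≤ M → j = i + 1 → |((i : ℝ)) - (j : ℝ)| = 1 := by
      intro i j _ _ hij
      subst hij
      push_cast
      rw [abs_sub_comm]
      simp
    refine ⟨M + (m + M), fun p =>
      cat M (fun i => F p.1 (M - i))
        (cat m (fun i => f (s (g p.1, g p.2) i)) (fun i => F p.2 i)), ?_, ?_⟩
    · intro p hp
      obtain ⟨hq0, hqm, hqstep⟩ := hsA (g p.1, g p.2) hp
      have j1 : F p.1 (M - M) = f (s (g p.1, g p.2) 0) := by
        rw [Nat.sub_self, hF0, hq0]; rfl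
      have j2 : f (s (g p.1, g p.2) m) = F p.2 0 := by
        rw [hqm, hF0]; rfl
      have jout : (fun i => F p.1 (M - i)) M =
          cat m (fun i => f (s (g p.1, g p.2) i)) (fun i => F p.2 i) 0 := by
        rw [cat_zero]; exact j1
      dsimp only
      refine ⟨?_, ?_, ?_⟩
      · rw [cat_zero]; simpa using hFM p.1
      · rw [cat_last (m₁ := M) (m₂ := m + M) (γ₁ := fun i => F p.1 (M - i)) jout,
            cat_last (m₁ := m) (m₂ := M) (γ₁ := fun i => f (s (g p.1, g p.2) i)) j2]
        simpa using hFM p.2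
      · refine cat_step ?_ (cat_step ?_ ?_ j2) jout
        · intro i hi
          have h1 : M - (i + 1) ≤ M := Nat.sub_le _ _
          have h2 : M - i ≤ M := Nat.sub_le _ _
          have := hFstep p.1 (M - (i + 1)) h1 (M - i) h2
          have heq : |((M - (i + 1) : ℕ) : ℝ) - ((M - i : ℕ) : ℝ)| = 1 := by
            apply habs _ _ h1 h2; omega
          rw [heq, mul_one] at this
          rw [dist_comm]
          exact this
        · intro i hi
          calc dist (f (s (g p.1, g p.2) i)) (f (s (g p.1, g p.2) (i + 1)))
              ≤ 1 * dist (s (g p.1, g p.2) i) (s (g p.1, g p.2) (i + 1)) := hf _ _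
            _ = dist (s (g p.1, g p.2) i) (s (g p.1, g p.2) (i + 1)) := one_mul _
            _ ≤ r := hqstep i hi
        · intro i hi
          have := hFstep p.2 i (by omega) (i + 1) (by omega)
          have heq : |((i : ℕ) : ℝ) - ((i + 1 : ℕ) : ℝ)| = 1 := by
            apply habs _ _ (by omega) (by omega); rfl
          rw [heq, mul_one] at this
          exact this
    · intro p hp q hq i hi
      dsimp only
      have hD1 : dist p.1 q.1 ≤ dist p.1 q.1 + dist p.2 q.2 :=
        le_add_of_nonneg_right dist_nonneg
      have hD2 : dist p.2 q.2 ≤ dist p.1 q.1 + dist p.2 q.2 :=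
        le_add_of_nonneg_left dist_nonneg
      refine cat_dist ?_ (cat_dist ?_ ?_) i hi
      · intro j hj
        calc dist (F p.1 (M - j)) (F q.1 (M - j))
            ≤ 1 * dist p.1 q.1 := hFlip (M - j) (Nat.sub_le _ _) p.1 q.1
          _ = dist p.1 q.1 := one_mul _
          _ ≤ _ := hD1
      · intro j hj
        calc dist (f (s (g p.1, g p.2) j)) (f (s (g q.1, g q.2) j))
            ≤ 1 * dist (s (g p.1, g p.2) j) (s (g q.1, g q.2) j) := hf _ _
          _ = dist (s (g p.1, g p.2) j) (s (g q.1, g q.2) j) := one_mul _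
          _ ≤ dist (g p.1) (g q.1) + dist (g p.2) (g q.2) := hsL _ hp _ hq j hj
          _ ≤ 1 * dist p.1 q.1 + 1 * dist p.2 q.2 := add_le_add (hg _ _) (hg _ _)
          _ = dist p.1 q.1 + dist p.2 q.2 := by ring
      · intro j hj
        calc dist (F p.2 j) (F q.2 j)
            ≤ 1 * dist p.2 q.2 := hFlip j (by omega) p.2 q.2
          _ = dist p.2 q.2 := one_mul _
          _ ≤ _ := hD2

/-- If `X` and `Y` have the same strictly `r`-homotopy type (via `1`-Lipschitz maps
`f, g` with `f ∘ g ≃_{(1,r)} id_Y` and `g ∘ f ≃_{(1,r)} id_X`), then `X × X` is covered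
by `l` open subsets with `r`-motion plannings iff `Y × Y` is; hence `TC_r(X) = TC_r(Y)`. -/
theorem dTC_eq_of_strict_dHomotopyEquiv {X Y : Type*} [MetricSpace X] [MetricSpace Y]
    (r : ℝ) (hr : 0 < r) (f : X → Y) (g : Y → X) (hf : IsLip 1 f) (hg : IsLip 1 g)
    (hfg : DHomotopic 1 r (f ∘ g) (id : Y → Y))
    (hgf : DHomotopic 1 r (g ∘ f) (id : X → X)) :
    (∀ l : ℕ, CoverMP X r l ↔ CoverMP Y r l) ∧ dTC r X = dTC r Y := by
  have hiff : ∀ l : ℕ, CoverMP X r l ↔ CoverMP Y r l := fun l =>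
    ⟨coverMP_of_dhe f g hf hg hfg, coverMP_of_dhe g f hg hf hgf⟩
  refine ⟨hiff, ?_⟩
  unfold dTC
  congr 1
  ext n
  constructor
  · rintro ⟨l, rfl, h⟩; exact ⟨l, rfl, (hiff l).mp h⟩
  · rintro ⟨l, rfl, h⟩; exact ⟨l, rfl, (hiff l).mpr h⟩
end

section
/- Let X be a nonempty metric space and r > 0. If X × X can be covered by l open subsets each admitting an r-motion planning, then X can be covered by l open r-categorical subsets. In particular cat_r(X) ≤ TC_r(X). -/
/-- A subset `A ⊆ X` is `r`-categorical if the inclusion `A → X` is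
`(1,r)`-homotopic to a constant map. -/
def RCategorical {X : Type*} [MetricSpace X] (r : ℝ) (A : Set X) : Prop :=
  ∃ x₀ : X, DHomotopic 1 r (fun a : A => (a : X)) (fun _ : A => x₀)

/-- The `r`-category `cat_r(X)`. -/
noncomputable def dCat (r : ℝ) (X : Type*) [MetricSpace X] : ℕ∞ :=
  sInf {n : ℕ∞ | ∃ k : ℕ, n = k ∧ ∃ V : Fin k → Set X,
    (∀ i, IsOpen (V i)) ∧ (⋃ i, V i) = Set.univ ∧ ∀ i, RCategorical r (V i)}

private lemma tele_le {Y : Type*} [MetricSpace Y] (f : ℕ → Y) (r : ℝ) (m : ℕ)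
    (h : ∀ i < m, dist (f i) (f (i + 1)) ≤ r) :
    ∀ j ≤ m, ∀ i ≤ j, dist (f i) (f j) ≤ r * ((j : ℝ) - i) := by
  intro j
  induction j with
  | zero =>
    intro _ i hi
    interval_cases i
    simp
  | succ n ih =>
    intro hj i hi
    rcases Nat.lt_or_ge i (n + 1) with h1 | h2
    · have hin : i ≤ n := Nat.lt_succ_iff.mp h1
      calc dist (f i) (f (n + 1)) ≤ dist (f i) (f n) + dist (f n) (f (n + 1)) :=
            dist_triangle _ _ _
        _ ≤ r * ((n : ℝ) - i) + r :=
            add_le_add (ih (Nat.le_of_succ_le hj) i hin) (h n (Nat.lt_of_succ_le hj))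
        _ = r * (((n : ℕ) + 1 : ℝ) - i) := by ring
        _ = r * (((n + 1 : ℕ) : ℝ) - i) := by push_cast; ring
    · have : i = n + 1 := le_antisymm hi h2
      subst this
      simp

/-- If `X × X` is covered by `l` open subsets each with an `r`-motion planning, then `X`
is covered by `l` open `r`-categorical subsets; in particular `cat_r(X) ≤ TC_r(X)`. -/
theorem dCat_le_dTC {X : Type*} [MetricSpace X] [Nonempty X] (r : ℝ) (hr : 0 < r) :
    (∀ l : ℕ, CoverMP X r l → ∃ V : Fin l → Set X,
      (∀ i, IsOpen (V i)) ∧ (⋃ i, V i) = Set.univ ∧ ∀ i, RCategorical r (V i)) ∧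
    dCat r X ≤ dTC r X := by
  have H : ∀ l : ℕ, CoverMP X r l → ∃ V : Fin l → Set X,
      (∀ i, IsOpen (V i)) ∧ (⋃ i, V i) = Set.univ ∧ ∀ i, RCategorical r (V i) := by
    rintro l ⟨U, hUo, hUc, hMP⟩
    obtain ⟨x₀⟩ := ‹Nonempty X›
    choose m s hs using hMP
    refine ⟨fun i => {x | (x, x₀) ∈ U i}, ?_, ?_, ?_⟩
    · intro i
      exact (hUo i).preimage (continuous_id.prodMk continuous_const)
    · ext x
      simp only [Set.mem_iUnion, Set.mem_univ, iff_true]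
      have : (x, x₀) ∈ ⋃ i, U i := hUc ▸ Set.mem_univ _
      simpa using this
    · intro i
      refine ⟨x₀, m i, fun a k => s i ((a : X), x₀) k, ?_, ?_, ?_, ?_⟩
      · intro a
        exact ((hs i).1 _ a.2).1
      · intro a
        exact ((hs i).1 _ a.2).2.1
      · intro k hk a a'
        have := (hs i).2 _ a.2 _ a'.2 k hk
        simp only [dist_self, add_zero] at this
        calc dist (s i ((a : X), x₀) k) (s i ((a' : X), x₀) k) ≤ dist (a : X) (a' : X) := this
          _ = 1 * dist a a' := by
              rw [one_mul]
              rfl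
      · intro a k hk j hj
        have hstep : ∀ t < m i, dist (s i ((a : X), x₀) t) (s i ((a : X), x₀) (t + 1)) ≤ r :=
          ((hs i).1 _ a.2).2.2
        rcases le_total k j with hkj | hjk
        · have := tele_le (fun t => s i ((a : X), x₀) t) r (m i) hstep j hj k hkj
          calc dist (s i ((a : X), x₀) k) (s i ((a : X), x₀) j) ≤ r * ((j : ℝ) - k) := this
            _ ≤ r * |(k : ℝ) - j| := by
                rw [abs_sub_comm]
                exact mul_le_mul_of_nonneg_left (le_abs_self _) hr.le
        · have := tele_le (fun t => s i ((a : X), x₀) t) r (m i) hstep k hk j hjk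
          rw [dist_comm]
          calc dist (s i ((a : X), x₀) j) (s i ((a : X), x₀) k) ≤ r * ((k : ℝ) - j) := this
            _ ≤ r * |(k : ℝ) - j| := mul_le_mul_of_nonneg_left (le_abs_self _) hr.le
  refine ⟨H, sInf_le_sInf ?_⟩
  rintro n ⟨l, rfl, hc⟩
  exact ⟨l, rfl, H l hc⟩
end

section
/- Let X be a metric space and r > 0, and suppose X is r-connected. If X × X (with the metric d((x,y),(x',y')) = d(x,x') + d(y,y')) can be covered by k open r-categorical subsets, then X × X can be covered by k open subsets each admitting an r-motion planning. In particular TC_r(X) ≤ cat_r(X × X). -/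
/-- A subset `A` of `X × X` (with the `ℓ¹`-metric
`d((x,y),(x',y')) = d(x,x') + d(y,y')`) is `r`-categorical: the inclusion `A → X × X`
is `(1,r)`-homotopic to a constant map, all Lipschitz conditions being taken with
respect to the `ℓ¹`-metric on `X × X`. -/
def RCategoricalProd {X : Type*} [MetricSpace X] (r : ℝ) (A : Set (X × X)) : Prop :=
  ∃ (p₀ : X × X) (m : ℕ) (F : A → ℕ → X × X),
    (∀ a, F a 0 = (a : X × X)) ∧ (∀ a, F a m = p₀) ∧
    (∀ i ≤ m, ∀ a b : A,
      dist (F a i).1 (F b i).1 + dist (F a i).2 (F b i).2 ≤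
        1 * (dist (a : X × X).1 (b : X × X).1 + dist (a : X × X).2 (b : X × X).2)) ∧
    (∀ a : A, ∀ i ≤ m, ∀ j ≤ m,
      dist (F a i).1 (F a j).1 + dist (F a i).2 (F a j).2 ≤ r * |(i : ℝ) - (j : ℝ)|)

/-- The `r`-category of `X × X` with the `ℓ¹`-metric. -/
noncomputable def dCatProd (r : ℝ) (X : Type*) [MetricSpace X] : ℕ∞ :=
  sInf {n : ℕ∞ | ∃ k : ℕ, n = k ∧ ∃ V : Fin k → Set (X × X),
    (∀ i, IsOpen (V i)) ∧ (⋃ i, V i) = Set.univ ∧ ∀ i, RCategoricalProd r (V i)}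

section Key

variable {X : Type*} [MetricSpace X]

theorem key_hasMotionPlan (r : ℝ) (hr : 0 < r)
    (hconn : ∀ x y : X, ∃ (m : ℕ) (γ : ℕ → X),
      γ 0 = x ∧ γ m = y ∧ ∀ i < m, dist (γ i) (γ (i + 1)) ≤ r)
    (A : Set (X × X)) (hA : RCategoricalProd r A) : HasMotionPlan r A := by
  classical
  obtain ⟨p₀, m, F, hF0, hFm, hLip, hTime⟩ := hA
  obtain ⟨n, γ, hγ0, hγn, hγstep⟩ := hconn p₀.1 p₀.2
  set M := 2 * m + n + 3 with hM
  have hTime1 : ∀ (a : A), ∀ i ≤ m, ∀ j ≤ m,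
      dist (F a i).1 (F a j).1 ≤ r * |(i : ℝ) - (j : ℝ)| := fun a i hi j hj =>
    le_trans (le_add_of_nonneg_right dist_nonneg) (hTime a i hi j hj)
  have hTime2 : ∀ (a : A), ∀ i ≤ m, ∀ j ≤ m,
      dist (F a i).2 (F a j).2 ≤ r * |(i : ℝ) - (j : ℝ)| := fun a i hi j hj =>
    le_trans (le_add_of_nonneg_left dist_nonneg) (hTime a i hi j hj)
  have habs : ∀ k : ℕ, |(k : ℝ) - ((k + 1 : ℕ) : ℝ)| = 1 := by
    intro k
    push_cast
    rw [show (k : ℝ) - (k + 1) = -1 by ring, abs_neg, abs_one]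
  have hstep1 : ∀ (a : A) (i : ℕ),
      dist (F a (min i m)).1 (F a (min (i + 1) m)).1 ≤ r := by
    intro a i
    rcases Nat.lt_or_ge i m with h | h
    · have e1 : min i m = i := by omega
      have e2 : min (i + 1) m = i + 1 := by omega
      rw [e1, e2]
      calc dist (F a i).1 (F a (i + 1)).1 ≤ r * |(i : ℝ) - ((i + 1 : ℕ) : ℝ)| :=
            hTime1 a i h.le (i + 1) (by omega)
        _ = r := by rw [habs, mul_one]
    · have e1 : min i m = m := by omega
      have e2 : min (i + 1) m = m := by omega
      rw [e1, e2, dist_self]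
      exact hr.le
  have hstep2 : ∀ (a : A) (i : ℕ),
      dist (F a (min i m)).2 (F a (min (i + 1) m)).2 ≤ r := by
    intro a i
    rcases Nat.lt_or_ge i m with h | h
    · have e1 : min i m = i := by omega
      have e2 : min (i + 1) m = i + 1 := by omega
      rw [e1, e2]
      calc dist (F a i).2 (F a (i + 1)).2 ≤ r * |(i : ℝ) - ((i + 1 : ℕ) : ℝ)| :=
            hTime2 a i h.le (i + 1) (by omega)
        _ = r := by rw [habs, mul_one]
    · have e1 : min i m = m := by omega
      have e2 : min (i + 1) m = m := by omega
      rw [e1, e2, dist_self]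
      exact hr.le
  have hγs : ∀ j : ℕ, dist (γ (min j n)) (γ (min (j + 1) n)) ≤ r := by
    intro j
    rcases Nat.lt_or_ge j n with h | h
    · have e1 : min j n = j := by omega
      have e2 : min (j + 1) n = j + 1 := by omega
      rw [e1, e2]
      exact hγstep j h
    · have e1 : min j n = n := by omega
      have e2 : min (j + 1) n = n := by omega
      rw [e1, e2, dist_self]
      exact hr.le
  refine ⟨M, fun p i =>
    if h : p ∈ A then
      if i ≤ m + 1 then (F ⟨p, h⟩ (min i m)).1
      else if i ≤ m + n + 2 then γ (min (i - (m + 1)) n)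
      else (F ⟨p, h⟩ (min (M - i) m)).2
    else p.1, ?_, ?_⟩
  · intro p hp
    refine ⟨?_, ?_, ?_⟩
    · simp only [dif_pos hp]
      rw [if_pos (show (0 : ℕ) ≤ m + 1 by omega), Nat.zero_min, hF0]
    · simp only [dif_pos hp]
      rw [if_neg (show ¬ M ≤ m + 1 by omega), if_neg (show ¬ M ≤ m + n + 2 by omega),
        Nat.sub_self, Nat.zero_min, hF0]
    · intro i hi
      simp only [dif_pos hp]
      by_cases h1 : i + 1 ≤ m + 1
      · rw [if_pos (show i ≤ m + 1 by omega), if_pos h1]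
        exact hstep1 ⟨p, hp⟩ i
      by_cases h2 : i ≤ m + 1
      · have hi' : i = m + 1 := by omega
        subst hi'
        rw [if_pos h2, if_neg h1, if_pos (show m + 1 + 1 ≤ m + n + 2 by omega),
          show min (m + 1) m = m by omega, hFm, show m + 1 + 1 - (m + 1) = 1 by omega,
          ← hγ0]
        rcases Nat.eq_zero_or_pos n with hn | hn
        · rw [show min 1 n = 0 by omega, dist_self]
          exact hr.le
        · rw [show min 1 n = 1 by omega]
          exact hγstep 0 hn
      by_cases h3 : i + 1 ≤ m + n + 2
      · rw [if_neg h2, if_pos (show i ≤ m + n + 2 by omega), if_neg (show ¬ i + 1 ≤ m + 1 from h1),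
          if_pos h3, show i + 1 - (m + 1) = (i - (m + 1)) + 1 by omega]
        exact hγs _
      by_cases h4 : i ≤ m + n + 2
      · have hi' : i = m + n + 2 := by omega
        subst hi'
        rw [if_neg h2, if_pos h4, if_neg h1, if_neg h3,
          show m + n + 2 - (m + 1) = n + 1 by omega, show min (n + 1) n = n by omega, hγn,
          show M - (m + n + 2 + 1) = m by omega, Nat.min_self, hFm, dist_self]
        exact hr.le
      · rw [if_neg h2, if_neg h4, if_neg h1, if_neg h3,
          show M - i = (M - (i + 1)) + 1 by omega, dist_comm]
        exact hstep2 ⟨p, hp⟩ (M - (i + 1))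
  · intro p hp q hq i hi
    simp only [dif_pos hp, dif_pos hq]
    by_cases h1 : i ≤ m + 1
    · rw [if_pos h1, if_pos h1]
      have h := hLip (min i m) (by omega) ⟨p, hp⟩ ⟨q, hq⟩
      rw [one_mul] at h
      exact le_trans (le_add_of_nonneg_right dist_nonneg) h
    by_cases h2 : i ≤ m + n + 2
    · rw [if_neg h1, if_neg h1, if_pos h2, if_pos h2, dist_self]
      positivity
    · rw [if_neg h1, if_neg h1, if_neg h2, if_neg h2]
      have h := hLip (min (M - i) m) (by omega) ⟨p, hp⟩ ⟨q, hq⟩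
      rw [one_mul] at h
      exact le_trans (le_add_of_nonneg_left dist_nonneg) h

end Key

theorem dTC_le_dCat_prod' {X : Type*} [MetricSpace X] (r : ℝ) (hr : 0 < r)
    (hconn : ∀ x y : X, ∃ (m : ℕ) (γ : ℕ → X),
      γ 0 = x ∧ γ m = y ∧ ∀ i < m, dist (γ i) (γ (i + 1)) ≤ r) :
    (∀ k : ℕ, (∃ V : Fin k → Set (X × X),
        (∀ i, IsOpen (V i)) ∧ (⋃ i, V i) = Set.univ ∧ ∀ i, RCategoricalProd r (V i)) →
      CoverMP X r k) ∧
    dTC r X ≤ dCatProd r X := by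
  have h1 : ∀ k : ℕ, (∃ V : Fin k → Set (X × X),
      (∀ i, IsOpen (V i)) ∧ (⋃ i, V i) = Set.univ ∧ ∀ i, RCategoricalProd r (V i)) →
      CoverMP X r k := by
    rintro k ⟨V, hV, hcov, hcat⟩
    exact ⟨V, hV, hcov, fun i => key_hasMotionPlan r hr hconn (V i) (hcat i)⟩
  refine ⟨h1, ?_⟩
  apply sInf_le_sInf
  rintro nn ⟨k, rfl, hV⟩
  exact ⟨k, rfl, h1 k hV⟩


/-- If `X` is `r`-connected and `X × X` (with the `ℓ¹`-metric) is covered by `k` open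
`r`-categorical subsets, then `X × X` is covered by `k` open subsets each with an
`r`-motion planning; in particular `TC_r(X) ≤ cat_r(X × X)`. -/
theorem dTC_le_dCat_prod {X : Type*} [MetricSpace X] (r : ℝ) (hr : 0 < r)
    (hconn : ∀ x y : X, ∃ (m : ℕ) (γ : ℕ → X),
      γ 0 = x ∧ γ m = y ∧ ∀ i < m, dist (γ i) (γ (i + 1)) ≤ r) :
    (∀ k : ℕ, (∃ V : Fin k → Set (X × X),
        (∀ i, IsOpen (V i)) ∧ (⋃ i, V i) = Set.univ ∧ ∀ i, RCategoricalProd r (V i)) →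
      CoverMP X r k) ∧
    dTC r X ≤ dCatProd r X := by
  exact dTC_le_dCat_prod' r hr hconn
end

section
/- Let X be a metric space and r > 0. Then TC_r(X) = 1 if and only if X is r-contractible; that is, there exists an r-motion planning defined on all of X × X if and only if the identity map of X is (1,r)-homotopic to a constant map. -/
private lemma chain_aux {X : Type*} [MetricSpace X] {r : ℝ} {m : ℕ} {f : ℕ → X}
    (h : ∀ i < m, dist (f i) (f (i + 1)) ≤ r) :
    ∀ j ≤ m, ∀ i ≤ j, dist (f i) (f j) ≤ r * ((j : ℝ) - i) := by
  intro j
  induction j with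
  | zero => intro _ i hi; interval_cases i; simp
  | succ k ih =>
    intro hk i hi
    rcases eq_or_lt_of_le hi with h' | h'
    · subst h'; simp
    · have hik : i ≤ k := Nat.lt_succ_iff.mp h'
      have h1 := ih (Nat.le_of_succ_le hk) i hik
      have h2 := h k (Nat.lt_of_succ_le hk)
      calc dist (f i) (f (k + 1)) ≤ dist (f i) (f k) + dist (f k) (f (k + 1)) :=
            dist_triangle _ _ _
        _ ≤ r * ((k : ℝ) - i) + r := add_le_add h1 h2
        _ = r * (((k + 1 : ℕ) : ℝ) - i) := by push_cast; ring

private lemma chain_abs {X : Type*} [MetricSpace X] {r : ℝ} {m : ℕ} {f : ℕ → X}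
    (h : ∀ i < m, dist (f i) (f (i + 1)) ≤ r) :
    ∀ i ≤ m, ∀ j ≤ m, dist (f i) (f j) ≤ r * |(i : ℝ) - (j : ℝ)| := by
  intro i hi j hj
  rcases le_total i j with hij | hij
  · have hc := chain_aux h j hj i hij
    have : |(i : ℝ) - j| = (j : ℝ) - i := by
      rw [abs_sub_comm, abs_of_nonneg (sub_nonneg.mpr (by exact_mod_cast hij))]
    rwa [this]
  · rw [dist_comm]
    have hc := chain_aux h i hi j hij
    have : |(i : ℝ) - j| = (i : ℝ) - j := by
      rw [abs_of_nonneg (sub_nonneg.mpr (by exact_mod_cast hij))]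
    rwa [this]

/-- `TC_r(X) = 1` iff `X` is `r`-contractible; equivalently, an `r`-motion planning
exists on all of `X × X` iff `id_X` is `(1,r)`-homotopic to a constant map. -/
theorem dTC_eq_one_iff_dContractible {X : Type*} [MetricSpace X] [Nonempty X]
    (r : ℝ) (hr : 0 < r) :
    (dTC r X = 1 ↔ DContractible r X) ∧
    (HasMotionPlan r (Set.univ : Set (X × X)) ↔ DContractible r X) := by
  have key : HasMotionPlan r (Set.univ : Set (X × X)) ↔ DContractible r X := by
    constructor
    · rintro ⟨m, s, h1, h2⟩
      set x₀ := Classical.arbitrary X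
      refine ⟨x₀, m, fun x i => s (x, x₀) i, ?_, ?_, ?_, ?_⟩
      · exact fun x => (h1 (x, x₀) trivial).1
      · exact fun x => (h1 (x, x₀) trivial).2.1
      · intro i hi x x'
        have := h2 (x, x₀) trivial (x', x₀) trivial i hi
        simpa using this
      · intro x i hi j hj
        exact chain_abs (fun i hi => (h1 (x, x₀) trivial).2.2 i hi) i hi j hj
    · rintro ⟨x₀, m, F, hF0, hFm, hLip, hTime⟩
      rcases Nat.eq_zero_or_pos m with hm | hm
      · -- degenerate: every point equals x₀
        have htriv : ∀ x : X, x = x₀ := fun x => by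
          have := hFm x; rw [hm, hF0] at this; exact this
        refine ⟨0, fun p _ => p.1, ⟨?_, ?_⟩⟩
        · intro p _
          refine ⟨rfl, ?_, fun i hi => absurd hi (Nat.not_lt_zero i)⟩
          show p.1 = p.2
          rw [htriv p.1, htriv p.2]
        · intro p _ q _ i _
          show dist p.1 q.1 ≤ _
          exact le_add_of_nonneg_right dist_nonneg
      · set sp : X × X → ℕ → X :=
          fun p i => if i ≤ m then F p.1 i else F p.2 (2 * m - i) with hsp
        have hsple : ∀ p i, i ≤ m → sp p i = F p.1 i := fun p i hi => by
          simp only [hsp, if_pos hi]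
        have hspgt : ∀ p i, ¬ i ≤ m → sp p i = F p.2 (2 * m - i) := fun p i hi => by
          simp only [hsp, if_neg hi]
        refine ⟨2 * m, sp, ⟨?_, ?_⟩⟩
        · intro p _
          refine ⟨?_, ?_, ?_⟩
          · rw [hsple p 0 (Nat.zero_le m), hF0]; rfl
          · rw [hspgt p (2 * m) (by omega), Nat.sub_self, hF0]; rfl
          · intro i hi
            by_cases h1 : i + 1 ≤ m
            · rw [hsple p i (by omega), hsple p (i + 1) h1]
              have := hTime p.1 i (by omega) (i + 1) h1
              calc dist (F p.1 i) (F p.1 (i + 1)) ≤ r * |(i : ℝ) - ((i + 1 : ℕ) : ℝ)| := this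
                _ = r := by push_cast; rw [show (i : ℝ) - (i + 1) = -1 by ring]; simp
            · by_cases h0 : i ≤ m
              · have him : i = m := by omega
                rw [him, hsple p m le_rfl, hspgt p (m + 1) (by omega), hFm p.1, ← hFm p.2]
                have hsub : 2 * m - (m + 1) = m - 1 := by omega
                rw [hsub]
                have := hTime p.2 m le_rfl (m - 1) (by omega)
                calc dist (F p.2 m) (F p.2 (m - 1)) ≤ r * |(m : ℝ) - ((m - 1 : ℕ) : ℝ)| := this
                  _ = r := by
                    rw [Nat.cast_sub (by omega : 1 ≤ m)]
                    push_cast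
                    rw [show (m : ℝ) - ((m : ℝ) - 1) = 1 by ring]; simp
              · rw [hspgt p i h0, hspgt p (i + 1) h1]
                have := hTime p.2 (2 * m - i) (by omega) (2 * m - (i + 1)) (by omega)
                calc dist (F p.2 (2 * m - i)) (F p.2 (2 * m - (i + 1)))
                    ≤ r * |((2 * m - i : ℕ) : ℝ) - ((2 * m - (i + 1) : ℕ) : ℝ)| := this
                  _ = r := by
                    rw [Nat.cast_sub (by omega : i ≤ 2 * m),
                        Nat.cast_sub (by omega : i + 1 ≤ 2 * m)]
                    push_cast
                    rw [show (2 * (m:ℝ) - i) - (2 * m - (i + 1)) = 1 by ring]; simp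
        · intro p _ q _ i hi
          by_cases h0 : i ≤ m
          · rw [hsple p i h0, hsple q i h0]
            have := hLip i h0 p.1 q.1
            rw [one_mul] at this
            exact this.trans (le_add_of_nonneg_right dist_nonneg)
          · rw [hspgt p i h0, hspgt q i h0]
            have := hLip (2 * m - i) (by omega) p.2 q.2
            rw [one_mul] at this
            exact this.trans (le_add_of_nonneg_left dist_nonneg)
  refine ⟨?_, key⟩
  constructor
  · intro h
    rw [← key]
    have hS : {n : ℕ∞ | ∃ l : ℕ, n = l ∧ CoverMP X r l}.Nonempty := by
      by_contra hne
      rw [Set.not_nonempty_iff_eq_empty] at hne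
      rw [dTC, hne, sInf_empty] at h
      exact absurd h (by simp)
    set T := {l : ℕ | CoverMP X r l} with hTdef
    have hT : T.Nonempty := by
      obtain ⟨n, l, rfl, hl⟩ := hS; exact ⟨l, hl⟩
    have hmin : sInf T ∈ T := Nat.sInf_mem hT
    have heq : dTC r X = ((sInf T : ℕ) : ℕ∞) := by
      apply le_antisymm
      · exact sInf_le ⟨_, rfl, hmin⟩
      · apply le_sInf
        rintro n ⟨l, rfl, hl⟩
        exact_mod_cast Nat.sInf_le hl
    rw [h] at heq
    have h1 : (sInf T : ℕ) = 1 := by exact_mod_cast heq.symm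
    have hc : CoverMP X r 1 := h1 ▸ hmin
    obtain ⟨U, hUopen, hUcov, hUmp⟩ := hc
    have hU0 : U 0 = Set.univ := by
      rw [← hUcov]
      ext p
      simp only [Set.mem_iUnion]
      exact ⟨fun hp => ⟨0, hp⟩, fun ⟨i, hi⟩ => by rwa [Subsingleton.elim 0 i]⟩
    exact hU0 ▸ hUmp 0
  · intro h
    have hmp := key.mpr h
    have h1 : CoverMP X r 1 :=
      ⟨fun _ => Set.univ, fun _ => isOpen_univ, by rw [Set.iUnion_const], fun _ => hmp⟩
    apply le_antisymm
    · exact sInf_le ⟨1, by simp, h1⟩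
    · apply le_sInf
      rintro n ⟨l, rfl, hl⟩
      have hl0 : l ≠ 0 := by
        rintro rfl
        obtain ⟨U, _, hUcov, _⟩ := hl
        have : (Set.univ : Set (X × X)).Nonempty := Set.univ_nonempty
        rw [← hUcov] at this
        obtain ⟨p, hp⟩ := this
        simp at hp
      exact_mod_cast Nat.one_le_iff_ne_zero.mpr hl0
end
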